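/- Let d, k, a, f be positive integers with f ≥ 2 and a dividing k², and set l = k²/a. Suppose W₁, …, W_f is a set of mutually quasi-unbiased weighing matrices for parameters (d, k, l, a). Then the f−1 matrices (1/√a)·W₂·W₁ᵀ, …, (1/√a)·W_f·W₁ᵀ form a set of mutually unbiased weighing matrices of order d and weight l. -/
import Mathlib


open Matrix

/-- `W` is a weighing matrix of order `d` and weight `k`: a `d × d` real matrix with all
entries in `{-1, 0, 1}` such that `W * Wᵀ = k • 1`. -/
def IsWeighing {d : ℕ} (k : ℝ) (W : Matrix (Fin d) (Fin d) ℝ) : Prop :=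
  (∀ i j, W i j = -1 ∨ W i j = 0 ∨ W i j = 1) ∧
    W * Wᵀ = k • (1 : Matrix (Fin d) (Fin d) ℝ)

/-- A family of mutually unbiased weighing matrices of order `d` and weight `k`:
each member is a weighing matrix of weight `k`, and for distinct members
`(1/√k) • (Wᵢ * Wⱼᵀ)` is again a weighing matrix of weight `k`. -/
def MUWM {d f : ℕ} (k : ℝ) (W : Fin f → Matrix (Fin d) (Fin d) ℝ) : Prop :=
  (∀ i, IsWeighing k (W i)) ∧
    ∀ i j, i ≠ j → IsWeighing k ((Real.sqrt k)⁻¹ • (W i * (W j)ᵀ))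

/-- A family of mutually quasi-unbiased weighing matrices for parameters `(d, k, l, a)`:
each member is a weighing matrix of weight `k`, and for distinct members
`(1/√a) • (Wᵢ * Wⱼᵀ)` is a weighing matrix of weight `l`. -/
def MQUWM {d f : ℕ} (k l a : ℝ) (W : Fin f → Matrix (Fin d) (Fin d) ℝ) : Prop :=
  (∀ i, IsWeighing k (W i)) ∧
    ∀ i j, i ≠ j → IsWeighing l ((Real.sqrt a)⁻¹ • (W i * (W j)ᵀ))

/-- if `W₁, …, W_f` are mutually quasi-unbiased weighing matrices for
parameters `(d, k, l, a)` with `l = k²/a`, then the `f - 1` matrices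
`(1/√a) • (Wᵢ * W₁ᵀ)` for `i = 2, …, f` are mutually unbiased weighing matrices of
order `d` and weight `l`. -/
theorem stmt0 (d k a f : ℕ) (hd : 0 < d) (hk : 0 < k) (ha : 0 < a)
    (hf : 2 ≤ f) (hdiv : a ∣ k ^ 2) (l : ℕ) (hl : l = k ^ 2 / a)
    (W : Fin f → Matrix (Fin d) (Fin d) ℝ)
    (hW : MQUWM (k : ℝ) (l : ℝ) (a : ℝ) W) :
    ∀ V : Fin (f - 1) → Matrix (Fin d) (Fin d) ℝ,
      (∀ i : Fin (f - 1),
        V i = (Real.sqrt a)⁻¹ •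
          (W ⟨i.1 + 1, by have := i.2; omega⟩ * (W ⟨0, by omega⟩)ᵀ)) →
      MUWM (l : ℝ) V := by
  intro V hV
  have hk0 : (k : ℝ) ≠ 0 := by positivity
  have ha0 : (a : ℝ) ≠ 0 := by positivity
  have hsa : Real.sqrt a ≠ 0 := by positivity
  have hlcast : (l : ℝ) = (k : ℝ) ^ 2 / a := by
    subst hl
    rw [Nat.cast_div hdiv ha0]
    push_cast; ring
  have hsl : Real.sqrt l = k / Real.sqrt a := by
    rw [hlcast, Real.sqrt_div' ((k:ℝ)^2) (by positivity), Real.sqrt_sq (by positivity)]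
  constructor
  · intro i
    rw [hV i]
    exact hW.2 _ _ (by simp [Fin.ext_iff])
  · intro i j hij
    set W0 := W ⟨0, by omega⟩ with hW0
    have hw0 : W0 * W0ᵀ = (k : ℝ) • 1 := (hW.1 _).2
    have hw0' : W0ᵀ * W0 = (k : ℝ) • 1 := by
      have h1 : W0 * ((k : ℝ)⁻¹ • W0ᵀ) = 1 := by
        rw [Matrix.mul_smul, hw0, smul_smul, inv_mul_cancel₀ hk0, one_smul]
      have h2 : ((k : ℝ)⁻¹ • W0ᵀ) * W0 = 1 := mul_eq_one_comm.mp h1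
      calc W0ᵀ * W0 = (k : ℝ) • (((k : ℝ)⁻¹ • W0ᵀ) * W0) := by
            rw [Matrix.smul_mul, smul_smul, mul_inv_cancel₀ hk0, one_smul]
        _ = (k : ℝ) • 1 := by rw [h2]
    rw [hV i, hV j]
    have key : ((Real.sqrt a)⁻¹ • (W ⟨i.1 + 1, by have := i.2; omega⟩ * W0ᵀ)) *
        ((Real.sqrt a)⁻¹ • (W ⟨j.1 + 1, by have := j.2; omega⟩ * W0ᵀ))ᵀ
        = ((Real.sqrt a)⁻¹ * (Real.sqrt a)⁻¹ * k) •
          (W ⟨i.1 + 1, by have := i.2; omega⟩ * (W ⟨j.1 + 1, by have := j.2; omega⟩)ᵀ) := by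
      rw [Matrix.transpose_smul, Matrix.transpose_mul, Matrix.transpose_transpose,
        Matrix.smul_mul, Matrix.mul_smul, smul_smul]
      rw [Matrix.mul_assoc, ← Matrix.mul_assoc W0ᵀ, hw0', Matrix.smul_mul, Matrix.one_mul,
        Matrix.mul_smul, smul_smul, mul_assoc]
    rw [key, smul_smul]
    have hcoef : (Real.sqrt l)⁻¹ * ((Real.sqrt a)⁻¹ * (Real.sqrt a)⁻¹ * k) = (Real.sqrt a)⁻¹ := by
      rw [hsl]
      field_simp
    rw [hcoef]
    exact hW.2 _ _ (by simp [Fin.ext_iff]; omega)
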